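/- arXiv:0712.1936 — 4 statements merged into one kernel-verified Lean document; each statement's English description precedes it below -/
import Mathlib

section
/- Suppose Σ_{l∈ℤ} |a_l|² = Σ_{l∈ℤ} |(1/J) Σ_{j=1}^J a_l e^{i l α_j}|² and that the set {l ∈ ℤ : a_l ≠ 0} contains two coprime integers. Then the coordinates of α are all congruent modulo 2π to a common constant: for every j ∈ {1,…,J} there exists k_j ∈ ℤ with α_j = α_1 + 2π k_j. -/
/-!
By the triangle inequality every term on the right is at most `‖a l‖ ^ 2`, so equality of the two
sums forces equality term by term. For `a l ≠ 0` this is the equality case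
`‖∑ j, exp (i l α_j)‖ = J`, which forces all the `l α_j` to agree modulo `2π`. A Bézout relation
`u p + v q = 1` for the two coprime indices then gives `α_j ≡ α_1 (mod 2π)`.
-/

open Complex

theorem AddSubgroup.mem_of_zsmul_mem_of_isCoprime {G : Type*} [AddCommGroup G] (H : AddSubgroup G)
    {x : G} {p q : ℤ} (hpq : IsCoprime p q) (hp : p • x ∈ H) (hq : q • x ∈ H) : x ∈ H := by
  obtain ⟨u, v, huv⟩ := hpq
  have hx : x = u • p • x + v • q • x := by
    rw [smul_smul, smul_smul, ← add_smul, huv, one_smul]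
  rw [hx]
  exact H.add_mem (H.zsmul_mem hp u) (H.zsmul_mem hq v)

theorem eq_of_le_of_tsum_eq {ι : Type*} {f g : ι → ℝ} (hle : f ≤ g) (hf : Summable f)
    (hg : Summable g) (h : ∑' i, f i = ∑' i, g i) : f = g := by
  by_contra hne
  obtain ⟨i, hi⟩ := Function.ne_iff.1 hne
  exact (Summable.tsum_lt_tsum hle ((hle i).lt_of_ne hi) hf hg).ne h

section UnitCircleSums

variable {ι : Type*} [Fintype ι]

theorem norm_sum_exp_mul_I_le_card (x : ι → ℝ) :
    ‖∑ i, exp (x i * I)‖ ≤ Fintype.card ι :=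
  (norm_sum_le _ _).trans_eq (by simp [norm_exp_ofReal_mul_I])

theorem sub_mem_zmultiples_of_norm_sum_exp_mul_I_eq_card {x : ι → ℝ}
    (h : ‖∑ i, exp (x i * I)‖ = Fintype.card ι) (i k : ι) :
    x i - x k ∈ AddSubgroup.zmultiples (2 * Real.pi) := by
  set S := ∑ i, exp (x i * I)
  -- `‖S‖² = Σ_{i,k} cos (x_i - x_k)` has `card ι ^ 2` terms, each `≤ 1`, so every cosine is `1`.
  have hcos : ∑ p : ι × ι, Real.cos (x p.1 - x p.2) = ∑ _p : ι × ι, (1 : ℝ) := by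
    have hS : S * (starRingEnd ℂ) S = ∑ p : ι × ι, exp (((x p.1 - x p.2 : ℝ) : ℂ) * I) := by
      simp only [S, map_sum, Finset.sum_mul_sum, Fintype.sum_prod_type, ← exp_conj, ← exp_add]
      refine Fintype.sum_congr _ _ fun i => Fintype.sum_congr _ _ fun k => ?_
      simp only [map_mul, conj_ofReal, conj_I]
      push_cast
      ring_nf
    have hre := congrArg Complex.re hS
    rw [mul_conj', h, re_sum] at hre
    simp only [exp_ofReal_mul_I_re] at hre
    rw [← hre]
    simp [Finset.card_univ, Fintype.card_prod, sq]
  have hall := (Finset.sum_eq_sum_iff_of_le fun p _ => Real.cos_le_one (x p.1 - x p.2)).1 hcos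
  obtain ⟨n, hn⟩ := (Real.cos_eq_one_iff _).1 (hall (i, k) (Finset.mem_univ _))
  exact AddSubgroup.mem_zmultiples_iff.2 ⟨n, by rw [zsmul_eq_mul, hn]⟩

theorem norm_one_div_card_mul_sum_mul_exp (c : ℂ) (x : ι → ℝ) :
    ‖(1 / (Fintype.card ι : ℂ)) * ∑ i, c * exp (x i * I)‖
      = ‖c‖ * (‖∑ i, exp (x i * I)‖ / Fintype.card ι) := by
  rw [← Finset.mul_sum, norm_mul, norm_mul, norm_div, norm_one, Complex.norm_natCast]
  ring

theorem norm_one_div_card_mul_sum_mul_exp_le (c : ℂ) (x : ι → ℝ) :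
    ‖(1 / (Fintype.card ι : ℂ)) * ∑ i, c * exp (x i * I)‖ ≤ ‖c‖ := by
  rw [norm_one_div_card_mul_sum_mul_exp]
  exact mul_le_of_le_one_right (norm_nonneg c) (div_le_one_of_le₀ (norm_sum_exp_mul_I_le_card x)
    (Nat.cast_nonneg _))

theorem sub_mem_zmultiples_of_norm_one_div_card_mul_sum_mul_exp_eq {c : ℂ} (hc : c ≠ 0)
    {x : ι → ℝ} (h : ‖(1 / (Fintype.card ι : ℂ)) * ∑ i, c * exp (x i * I)‖ = ‖c‖) (i k : ι) :
    x i - x k ∈ AddSubgroup.zmultiples (2 * Real.pi) := by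
  rw [norm_one_div_card_mul_sum_mul_exp, mul_eq_left₀ (norm_ne_zero_iff.2 hc)] at h
  have hcard : (Fintype.card ι : ℝ) ≠ 0 := by
    rintro h0
    simp [h0] at h
  exact sub_mem_zmultiples_of_norm_sum_exp_mul_I_eq_card ((div_eq_one_iff_eq hcard).1 h) i k

end UnitCircleSums

/-- If `Σ |a_l|² = Σ |(1/J) Σ_j a_l e^{i l α_j}|²` and the support of `a`
contains two coprime integers, then all the `α_j` are congruent modulo `2π` to `α_1`. -/
theorem stmt6 (J : ℕ) (hJ : 0 < J) (a : ℤ → ℂ)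
    (ha : Summable fun l : ℤ => ‖a l‖ ^ 2) (α : Fin J → ℝ)
    (heq : ∑' l : ℤ, ‖a l‖ ^ 2 =
      ∑' l : ℤ, ‖(1 / (J : ℂ)) * ∑ j : Fin J, a l * Complex.exp (Complex.I * (l : ℂ) * (α j : ℂ))‖ ^ 2)
    (hcop : ∃ p q : ℤ, p ≠ q ∧ a p ≠ 0 ∧ a q ≠ 0 ∧ IsCoprime p q) :
    ∀ j : Fin J, ∃ k : ℤ, α j = α ⟨0, hJ⟩ + 2 * Real.pi * (k : ℝ) := by
  obtain ⟨p, q, -, hap, haq, hpq⟩ := hcop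
  have hexp (l : ℤ) (j : Fin J) : I * l * α j = ((l * α j : ℝ) : ℂ) * I := by push_cast; ring
  simp only [hexp] at heq
  have hle : (fun l : ℤ => ‖(1 / (J : ℂ)) * ∑ j, a l * exp (((l * α j : ℝ) : ℂ) * I)‖ ^ 2) ≤
      fun l => ‖a l‖ ^ 2 := by
    intro l
    have h := norm_one_div_card_mul_sum_mul_exp_le (a l) fun j : Fin J => l * α j
    rw [Fintype.card_fin] at h
    exact pow_le_pow_left₀ (norm_nonneg _) h 2
  have hterm := eq_of_le_of_tsum_eq hle (ha.of_nonneg_of_le (fun l => by positivity) hle) ha heq.symm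
  have hmem (l : ℤ) (hl : a l ≠ 0) (j : Fin J) :
      l • (α j - α ⟨0, hJ⟩) ∈ AddSubgroup.zmultiples (2 * Real.pi) := by
    have h := sub_mem_zmultiples_of_norm_one_div_card_mul_sum_mul_exp_eq hl (by
      rw [Fintype.card_fin]
      exact (pow_left_inj₀ (norm_nonneg _) (norm_nonneg _) two_ne_zero).1 (congrFun hterm l))
      j ⟨0, hJ⟩
    rwa [zsmul_eq_mul, mul_sub]
  intro j
  obtain ⟨k, hk⟩ := AddSubgroup.mem_zmultiples_iff.1
    ((AddSubgroup.zmultiples _).mem_of_zsmul_mem_of_isCoprime hpq (hmem p hap j) (hmem q haq j))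
  rw [zsmul_eq_mul] at hk
  exact ⟨k, by linarith⟩
end

section
/- The function f⋆μ defined by (f⋆μ)(x) = ∫ f(x − y) dμ(y) is square-integrable on the circle, and (1/T) ∫₀ᵀ |(f⋆μ)(t)|² dt = Σ_{l∈ℤ} |δ_l|² |c_l(f)|², where δ_l = ∫ exp(2πi l ω/T) dμ(ω). -/
open MeasureTheory AddCircle
open scoped ENNReal

/-! Writing `f ⋆ μ` as the `μ`-average of the translates `f (· - y)`, Cauchy–Schwarz in `y`
followed by Fubini bounds its `L²` norm by `μ univ` times that of `f`. A translation by `y`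
multiplies the `l`-th Fourier coefficient by `e_{-l}(y)`, so integrating over `y` gives
`c_l(f ⋆ μ) = δ_{-l} c_l(f)` with `|δ_{-l}| = |δ_l|`, and Parseval's identity for `f ⋆ μ`
concludes. -/

theorem rpow_two_lintegral_le_lintegral_rpow_two_mul_measure_univ {α : Type*}
    [MeasurableSpace α] (μ : Measure α) {h : α → ℝ≥0∞} (hh : AEMeasurable h μ) :
    (∫⁻ a, h a ∂μ) ^ (2 : ℝ) ≤ (∫⁻ a, h a ^ (2 : ℝ) ∂μ) * μ Set.univ := by
  have holder := ENNReal.lintegral_mul_le_Lp_mul_Lq μ .two_two hh (aemeasurable_const (b := 1))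
  simp only [Pi.mul_apply, mul_one, ENNReal.one_rpow, lintegral_one] at holder
  calc (∫⁻ a, h a ∂μ) ^ (2 : ℝ)
      ≤ ((∫⁻ a, h a ^ (2 : ℝ) ∂μ) ^ (1 / (2 : ℝ)) * μ Set.univ ^ (1 / (2 : ℝ))) ^ (2 : ℝ) :=
        ENNReal.rpow_le_rpow holder (by norm_num)
    _ = (∫⁻ a, h a ^ (2 : ℝ) ∂μ) * μ Set.univ := by
        rw [ENNReal.mul_rpow_of_nonneg _ _ (by norm_num), ← ENNReal.rpow_mul, ← ENNReal.rpow_mul]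
        norm_num

theorem MeasureTheory.MemLp.integral_prod_left {α β E : Type*} [MeasurableSpace α]
    [MeasurableSpace β] [NormedAddCommGroup E] [NormedSpace ℝ E] {μ : Measure α} {ν : Measure β}
    [SFinite μ] [IsFiniteMeasure ν] {F : α × β → E} (hF : MemLp F 2 (μ.prod ν)) :
    MemLp (fun x => ∫ y, F (x, y) ∂ν) 2 μ := by
  refine ⟨hF.1.integral_prod_right', ?_⟩
  have hF2 := hF.2
  rw [eLpNorm_lt_top_iff_lintegral_rpow_enorm_lt_top two_ne_zero ENNReal.ofNat_ne_top,
    ENNReal.toReal_ofNat] at hF2 ⊢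
  have hpointwise : ∀ᵐ x ∂μ, ‖∫ y, F (x, y) ∂ν‖ₑ ^ (2 : ℝ)
      ≤ (∫⁻ y, ‖F (x, y)‖ₑ ^ (2 : ℝ) ∂ν) * ν Set.univ := by
    filter_upwards [hF.1.prodMk_left] with x hx
    exact (ENNReal.rpow_le_rpow (enorm_integral_le_lintegral_enorm _) (by norm_num)).trans
      (rpow_two_lintegral_le_lintegral_rpow_two_mul_measure_univ ν hx.enorm)
  calc ∫⁻ x, ‖∫ y, F (x, y) ∂ν‖ₑ ^ (2 : ℝ) ∂μ
      ≤ ∫⁻ x, (∫⁻ y, ‖F (x, y)‖ₑ ^ (2 : ℝ) ∂ν) * ν Set.univ ∂μ := lintegral_mono_ae hpointwise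
    _ = (∫⁻ p, ‖F p‖ₑ ^ (2 : ℝ) ∂μ.prod ν) * ν Set.univ := by
      rw [lintegral_mul_const' _ _ (measure_ne_top ν _),
        lintegral_prod _ (hF.1.enorm.pow_const _)]
    _ < ∞ := ENNReal.mul_lt_top hF2 (measure_lt_top ν _)

theorem MeasureTheory.MemLp.integral_comp_sub {G E : Type*} [MeasurableSpace G] [AddGroup G]
    [MeasurableAdd₂ G] [MeasurableNeg G] [NormedAddCommGroup E] [NormedSpace ℝ E]
    {ν : Measure G} [SFinite ν] [ν.IsAddRightInvariant] {f : G → E} (hf : MemLp f 2 ν)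
    (μ : Measure G) [IsFiniteMeasure μ] : MemLp (fun x => ∫ y, f (x - y) ∂μ) 2 ν :=
  ((hf.comp_fst μ).comp_measurePreserving (measurePreserving_sub_prod ν μ)).integral_prod_left

theorem norm_integral_fourier_neg {T : ℝ} (μ : Measure (AddCircle T)) (n : ℤ) :
    ‖∫ y, fourier (-n) y ∂μ‖ = ‖∫ y, fourier n y ∂μ‖ := by
  simp only [fourier_neg, integral_conj, RCLike.norm_conj]

section Fourier

variable {T : ℝ} [Fact (0 < T)] {E : Type*} [NormedAddCommGroup E] [NormedSpace ℂ E]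

theorem fourierCoeff_comp_sub (f : AddCircle T → E) (n : ℤ) (y : AddCircle T) :
    fourierCoeff (fun x => f (x - y)) n = fourier (-n) y • fourierCoeff f n := by
  rw [fourierCoeff, ← integral_add_right_eq_self _ y, fourierCoeff, ← integral_smul]
  congr 1 with t
  rw [add_sub_cancel_right, fourier_apply, fourier_apply, fourier_apply, smul_add, toCircle_add,
    Circle.coe_mul, mul_comm, mul_smul]

theorem fourierCoeff_integral_comp_sub [CompleteSpace E] {f : AddCircle T → E}
    (hf : Integrable f haarAddCircle) (μ : Measure (AddCircle T)) [IsFiniteMeasure μ] (n : ℤ) :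
    fourierCoeff (fun x => ∫ y, f (x - y) ∂μ) n
      = (∫ y, fourier (-n) y ∂μ) • fourierCoeff f n := by
  have hprod : Integrable (fun p : AddCircle T × AddCircle T => fourier (-n) p.1 • f (p.1 - p.2))
      (haarAddCircle.prod μ) := by
    refine ((measurePreserving_sub_prod _ μ).integrable_comp_of_integrable
      (hf.comp_fst μ)).bdd_smul 1 ?_ (ae_of_all _ fun p => ?_)
    · exact ((map_continuous (fourier (-n))).comp continuous_fst).aestronglyMeasurable
    · rw [fourier_apply, Circle.norm_coe]
  calc fourierCoeff (fun x => ∫ y, f (x - y) ∂μ) n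
      = ∫ t, ∫ y, fourier (-n) t • f (t - y) ∂μ ∂haarAddCircle := by
        simp only [fourierCoeff, integral_smul]
    _ = ∫ y, fourierCoeff (fun x => f (x - y)) n ∂μ := integral_integral_swap hprod
    _ = (∫ y, fourier (-n) y ∂μ) • fourierCoeff f n := by
        simp only [fourierCoeff_comp_sub, integral_smul_const]

theorem MeasureTheory.MemLp.tsum_sq_fourierCoeff {f : AddCircle T → ℂ}
    (hf : MemLp f 2 AddCircle.haarAddCircle) :
    ∑' n : ℤ, ‖fourierCoeff f n‖ ^ 2 = ∫ t, ‖f t‖ ^ 2 ∂AddCircle.haarAddCircle := by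
  rw [← fourierCoeff_congr_ae hf.coeFn_toLp, _root_.tsum_sq_fourierCoeff]
  exact integral_congr_ae (hf.coeFn_toLp.fun_comp (‖·‖ ^ 2))

end Fourier

/-- For `f` square-integrable on the circle `ℝ/Tℤ` and `μ` a finite measure
on the circle, `f⋆μ` is square-integrable and
`(1/T)∫₀ᵀ |(f⋆μ)(t)|² dt = Σ_{l∈ℤ} |δ_l|² |c_l(f)|²` with `δ_l = ∫ e^{2πi l ω/T} dμ(ω)`. -/
theorem stmt12 (T : ℝ) [hT : Fact (0 < T)] (f : AddCircle T → ℂ)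
    (hf : MemLp f 2 haarAddCircle)
    (μ : Measure (AddCircle T)) [IsFiniteMeasure μ] :
    MemLp (fun x => ∫ y, f (x - y) ∂μ) 2 haarAddCircle ∧
    ∫ t, ‖∫ y, f (t - y) ∂μ‖ ^ 2 ∂haarAddCircle =
      ∑' l : ℤ, ‖∫ ω, fourier l ω ∂μ‖ ^ 2 * ‖fourierCoeff f l‖ ^ 2 := by
  have hconv := hf.integral_comp_sub μ
  refine ⟨hconv, ?_⟩
  rw [← hconv.tsum_sq_fourierCoeff]
  refine tsum_congr fun l => ?_
  rw [fourierCoeff_integral_comp_sub (hf.integrable one_le_two), norm_smul, mul_pow,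
    norm_integral_fourier_neg]
end

section
/- Define, for odd n and h ∈ ℝ, U_n(h) = (1/n) Σ_{|l| ≤ (n−1)/2} w_l cos(l h) ξ_l η_l. Then sup_{h ∈ [−2π, 2π]} |U_n(h)| → 0 in probability as n → ∞ through odd integers. -/
/-!
Write `n = 2m + 1` and `U = U_n`. On an interval `[a, b]`, a `C¹` function satisfies
`U(h)⁴ ≤ (b - a)⁻¹ ∫ U⁴ + ∫ |4 U³ U'|`, and Young's inequality `|4 U³ U'| ≤ 3 n U⁴ + n⁻³ U'⁴`
turns this into `sup |U|⁴ ≤ ∫ (((b - a)⁻¹ + 3n) U⁴ + n⁻³ U'⁴)`. For fixed `h`, both `U(h)` and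
`U'(h)` are sums `Σ c_l ξ_l η_l` of independent centred variables, whose fourth moment is at most
`9 (Σ c_l²)²`. Since `|c_l| ≤ C / n` for `U` and `|c_l| ≤ C` for `U'`, this gives
`E U⁴ ≤ 9 C⁴ / n²` and `E U'⁴ ≤ 9 C⁴ n²`, so the expected integral is `O(1 / n)` and Markov's
inequality concludes. Second moments would only give an `O(1)` bound here.
-/

open Filter MeasureTheory ProbabilityTheory Real Set
open scoped ENNReal NNReal

lemma abs_four_mul_pow_three_mul_le (a b : ℝ) {c : ℝ} (hc : 0 < c) :
    |4 * a ^ 3 * b| ≤ 3 * c * a ^ 4 + (c ^ 3)⁻¹ * b ^ 4 := by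
  -- `3 u⁴ + v⁴ - 4 u³ v = (u - v)² (3 u² + 2 u v + v²)` with `u = c |a|`, `v = |b|`
  have amgm : 4 * (c * |a|) ^ 3 * |b| ≤ 3 * (c * |a|) ^ 4 + |b| ^ 4 := by
    nlinarith [mul_nonneg (sq_nonneg (c * |a| - |b|))
      (by positivity : 0 ≤ 3 * (c * |a|) ^ 2 + 2 * (c * |a|) * |b| + |b| ^ 2)]
  rw [abs_mul, abs_mul, abs_pow, abs_of_pos (by norm_num : (0:ℝ) < 4)]
  have hc3 : 0 < c ^ 3 := by positivity
  rw [← mul_le_mul_iff_of_pos_left hc3]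
  calc c ^ 3 * (4 * |a| ^ 3 * |b|) = 4 * (c * |a|) ^ 3 * |b| := by ring
    _ ≤ 3 * (c * |a|) ^ 4 + |b| ^ 4 := amgm
    _ = c ^ 3 * (3 * c * a ^ 4 + (c ^ 3)⁻¹ * b ^ 4) := by
      rw [mul_pow, pow_abs, pow_abs, abs_of_nonneg (by positivity : 0 ≤ a ^ 4),
        abs_of_nonneg (by positivity : 0 ≤ b ^ 4)]
      field_simp

lemma le_inv_mul_integral_add_integral_abs_deriv {g g' : ℝ → ℝ} {a b x : ℝ} (hab : a < b)
    (hg : ∀ t, HasDerivAt g (g' t) t) (hg' : Continuous g') (hx : x ∈ Icc a b) :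
    g x ≤ (b - a)⁻¹ * (∫ t in a..b, g t) + ∫ t in a..b, |g' t| := by
  have hgc : Continuous g := continuous_iff_continuousAt.2 fun t ↦ (hg t).continuousAt
  obtain ⟨s, hs, hmin⟩ := isCompact_Icc.exists_isMinOn (nonempty_Icc.2 hab.le) hgc.continuousOn
  have havg : g s ≤ (b - a)⁻¹ * ∫ t in a..b, g t := by
    have := intervalIntegral.integral_mono_on hab.le (intervalIntegrable_const (μ := volume))
      (hgc.intervalIntegrable a b) fun t ht ↦ hmin ht
    rw [intervalIntegral.integral_const, smul_eq_mul] at this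
    rw [le_inv_mul_iff₀ (sub_pos.2 hab)]
    linarith
  have hftc : g x - g s = ∫ t in s..x, g' t :=
    (intervalIntegral.integral_eq_sub_of_hasDerivAt (fun t _ ↦ hg t)
      (hg'.intervalIntegrable s x)).symm
  have hvar : ∫ t in s..x, g' t ≤ ∫ t in a..b, |g' t| := by
    calc ∫ t in s..x, g' t ≤ ∫ t in uIoc s x, |g' t| :=
          (le_abs_self _).trans
            (intervalIntegral.norm_integral_le_integral_norm_uIoc (f := g') (μ := volume))
      _ ≤ ∫ t in Ioc a b, |g' t| :=
          setIntegral_mono_set (hg'.abs.integrableOn_Icc.mono_set Ioc_subset_Icc_self)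
            (ae_of_all _ fun t ↦ abs_nonneg _)
            (Ioc_subset_Ioc (le_min hs.1 hx.1) (max_le hs.2 hx.2)).eventuallyLE
      _ = ∫ t in a..b, |g' t| := (intervalIntegral.integral_of_le hab.le).symm
  linarith

lemma pow_four_le_integral_of_hasDerivAt {f f' : ℝ → ℝ} {a b c x : ℝ} (hab : a < b)
    (hf : ∀ t, HasDerivAt f (f' t) t) (hf' : Continuous f') (hc : 0 < c) (hx : x ∈ Icc a b) :
    f x ^ 4 ≤ ∫ t in a..b, (((b - a)⁻¹ + 3 * c) * f t ^ 4 + (c ^ 3)⁻¹ * f' t ^ 4) := by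
  have hfc : Continuous f := continuous_iff_continuousAt.2 fun t ↦ (hf t).continuousAt
  have hf4 (t : ℝ) : HasDerivAt (fun s ↦ f s ^ 4) (4 * f t ^ 3 * f' t) t := by
    simpa using (hf t).fun_pow 4
  calc f x ^ 4 ≤ (b - a)⁻¹ * (∫ t in a..b, f t ^ 4) + ∫ t in a..b, |4 * f t ^ 3 * f' t| :=
        le_inv_mul_integral_add_integral_abs_deriv hab hf4 (by fun_prop) hx
    _ ≤ (b - a)⁻¹ * (∫ t in a..b, f t ^ 4) +
          ∫ t in a..b, (3 * c * f t ^ 4 + (c ^ 3)⁻¹ * f' t ^ 4) := by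
        gcongr
        exact intervalIntegral.integral_mono_on hab.le
          (Continuous.intervalIntegrable (by fun_prop) _ _)
          (Continuous.intervalIntegrable (by fun_prop) _ _)
          fun t _ ↦ abs_four_mul_pow_three_mul_le _ _ hc
    _ = ∫ t in a..b, (((b - a)⁻¹ + 3 * c) * f t ^ 4 + (c ^ 3)⁻¹ * f' t ^ 4) := by
        rw [← intervalIntegral.integral_const_mul, ← intervalIntegral.integral_add
          (Continuous.intervalIntegrable (by fun_prop) _ _)
          (Continuous.intervalIntegrable (by fun_prop) _ _)]
        congr 1 with t
        ring

lemma meas_ge_intervalIntegral_le {Ω : Type*} [MeasurableSpace Ω] {P : Measure Ω} [SFinite P]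
    {Q : ℝ → Ω → ℝ} (hQ : Measurable (Function.uncurry Q)) (hQ0 : ∀ t ω, 0 ≤ Q t ω)
    (hQint : ∀ t, Integrable (Q t) P) {a b B ε : ℝ} (hab : a ≤ b) (hε : 0 < ε)
    (hB : ∀ t, ∫ ω, Q t ω ∂P ≤ B) :
    P {ω | ε ≤ ∫ t in a..b, Q t ω} ≤ ENNReal.ofReal ((b - a) * B / ε) := by
  set G : Ω → ℝ≥0∞ := fun ω ↦ ∫⁻ t in Ioc a b, ENNReal.ofReal (Q t ω)
  have hsub : {ω | ε ≤ ∫ t in a..b, Q t ω} ⊆ {ω | ENNReal.ofReal ε ≤ G ω} := by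
    intro ω hω
    rw [mem_ofPred_eq, intervalIntegral.integral_of_le hab] at hω
    calc ENNReal.ofReal ε ≤ ‖∫ t in Ioc a b, Q t ω‖ₑ :=
          (ENNReal.ofReal_le_ofReal hω).trans (ofReal_le_enorm _)
      _ ≤ ∫⁻ t in Ioc a b, ‖Q t ω‖ₑ := enorm_integral_le_lintegral_enorm _
      _ = G ω := by simp only [G, Real.enorm_of_nonneg (hQ0 _ ω)]
  have hQ' : Measurable (Function.uncurry fun t ω ↦ ENNReal.ofReal (Q t ω)) := hQ.ennreal_ofReal
  calc P {ω | ε ≤ ∫ t in a..b, Q t ω} ≤ P {ω | ENNReal.ofReal ε ≤ G ω} := measure_mono hsub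
    _ ≤ (∫⁻ ω, G ω ∂P) / ENNReal.ofReal ε :=
        meas_ge_le_lintegral_div (hQ'.lintegral_prod_left').aemeasurable
          (ENNReal.ofReal_pos.2 hε).ne' ENNReal.ofReal_ne_top
    _ = (∫⁻ t in Ioc a b, ∫⁻ ω, ENNReal.ofReal (Q t ω) ∂P) / ENNReal.ofReal ε := by
        rw [lintegral_lintegral_swap hQ'.aemeasurable]
    _ ≤ (∫⁻ t in Ioc a b, ENNReal.ofReal B) / ENNReal.ofReal ε := by
        gcongr with t
        rw [← ofReal_integral_eq_lintegral_ofReal (hQint t) (ae_of_all _ (hQ0 t))]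
        exact ENNReal.ofReal_le_ofReal (hB t)
    _ = ENNReal.ofReal ((b - a) * B / ε) := by
        rw [setLIntegral_const, Real.volume_Ioc, mul_comm, ← ENNReal.ofReal_mul (sub_nonneg.2 hab),
          ← ENNReal.ofReal_div_of_pos hε]

lemma hasDerivAt_polynomial_mul_exp_sq (p : Polynomial ℝ) (a t : ℝ) :
    HasDerivAt (fun s ↦ p.eval s * rexp (a * s ^ 2 / 2))
      ((p.derivative.eval t + p.eval t * (a * t)) * rexp (a * t ^ 2 / 2)) t := by
  have he : HasDerivAt (fun s ↦ rexp (a * s ^ 2 / 2)) (rexp (a * t ^ 2 / 2) * (a * t)) t := by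
    have := ((hasDerivAt_pow 2 t).const_mul a).div_const 2
    convert this.exp using 1
    push_cast; ring
  exact ((p.hasDerivAt t).mul he).congr_deriv (by ring)

open Polynomial in
lemma integral_pow_four_gaussianReal (v : ℝ≥0) :
    ∫ x, x ^ 4 ∂gaussianReal 0 v = 3 * (v : ℝ) ^ 2 := by
  have h0 : (0 : ℝ) ∈ interior (integrableExpSet id (gaussianReal 0 v)) := by
    simp [integrableExpSet_id_gaussianReal]
  have hmoment := iteratedDeriv_mgf_zero h0 4
  simp only [mgf_id_gaussianReal, zero_mul, zero_add] at hmoment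
  set a : ℝ := (v : ℝ)
  have step : ∀ (n : ℕ) (p : ℝ[X]),
      iteratedDeriv n (fun t ↦ rexp (a * t ^ 2 / 2)) = (fun t ↦ p.eval t * rexp (a * t ^ 2 / 2)) →
      iteratedDeriv (n + 1) (fun t ↦ rexp (a * t ^ 2 / 2))
        = fun t ↦ (derivative p + p * C a * X).eval t * rexp (a * t ^ 2 / 2) := by
    intro n p hn
    rw [iteratedDeriv_succ, hn]
    funext t
    exact (hasDerivAt_polynomial_mul_exp_sq p a t).deriv.trans (by simp [mul_assoc])
  have d4 := step 3 _ (step 2 _ (step 1 _ (step 0 1 (by simp))))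
  rw [d4] at hmoment
  simp only [derivative_one, derivative_add, derivative_mul, derivative_C, derivative_X,
    eval_add, eval_mul, eval_C, eval_X, zero_mul, mul_zero, one_mul, mul_one, zero_add, add_zero,
    ne_eq, OfNat.ofNat_ne_zero, not_false_eq_true, zero_pow, zero_div, exp_zero, Pi.pow_apply,
    id_eq] at hmoment
  rw [← hmoment]
  ring

lemma integral_sq_gaussianReal (v : ℝ≥0) : ∫ x, x ^ 2 ∂gaussianReal 0 v = v := by
  rw [← variance_of_integral_eq_zero aemeasurable_id' integral_id_gaussianReal,
    variance_fun_id_gaussianReal]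

section Moments

variable {Ω : Type*} [MeasurableSpace Ω] {P : Measure Ω} {X Y : Ω → ℝ}

lemma MeasureTheory.MemLp.integrable_pow [IsFiniteMeasure P] {p k : ℕ} (hX : MemLp X p P)
    (hk : k ≤ p) : Integrable (fun ω ↦ X ω ^ k) P := by
  have := (hX.mono_exponent (by exact_mod_cast hk : (k : ℝ≥0∞) ≤ p)).integrable_norm_pow'
  refine (integrable_norm_iff (hX.aestronglyMeasurable.pow k)).1 ?_
  simpa only [Pi.pow_apply, norm_pow] using this

lemma ProbabilityTheory.IndepFun.memLp_mul (hXY : IndepFun X Y P) {p : ℝ≥0∞} (hp0 : p ≠ 0)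
    (hp : p ≠ ∞) (hX : MemLp X p P) (hY : MemLp Y p P) : MemLp (X * Y) p P := by
  refine (integrable_norm_rpow_iff (hX.aestronglyMeasurable.mul hY.aestronglyMeasurable) hp0
    hp).1 ?_
  have hnorm : IndepFun (fun ω ↦ ‖X ω‖ ^ p.toReal) (fun ω ↦ ‖Y ω‖ ^ p.toReal) P :=
    hXY.comp (φ := fun x : ℝ ↦ ‖x‖ ^ p.toReal) (ψ := fun x : ℝ ↦ ‖x‖ ^ p.toReal)
      (by fun_prop) (by fun_prop)
  simpa only [Pi.mul_def, norm_mul, mul_rpow (norm_nonneg _) (norm_nonneg _)] using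
    hnorm.integrable_mul (hX.integrable_norm_rpow hp0 hp) (hY.integrable_norm_rpow hp0 hp)

lemma ProbabilityTheory.IndepFun.integral_mul_pow (hXY : IndepFun X Y P) (k : ℕ)
    (hX : Integrable (fun ω ↦ X ω ^ k) P) (hY : Integrable (fun ω ↦ Y ω ^ k) P) :
    ∫ ω, (X ω * Y ω) ^ k ∂P = (∫ ω, X ω ^ k ∂P) * ∫ ω, Y ω ^ k ∂P := by
  simp_rw [mul_pow]
  have hpow := hXY.comp (measurable_id.pow_const k) (measurable_id.pow_const k)
  exact hpow.integral_fun_mul_eq_mul_integral hX.aestronglyMeasurable hY.aestronglyMeasurable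

variable [IsProbabilityMeasure P]

lemma ProbabilityTheory.IndepFun.integral_add_pow_four (hXY : IndepFun X Y P) (hX : MemLp X 4 P)
    (hY : MemLp Y 4 P) (hX0 : ∫ ω, X ω ∂P = 0) (hY0 : ∫ ω, Y ω ∂P = 0) :
    ∫ ω, (X ω + Y ω) ^ 4 ∂P
      = ∫ ω, X ω ^ 4 ∂P + 6 * (∫ ω, X ω ^ 2 ∂P) * (∫ ω, Y ω ^ 2 ∂P) + ∫ ω, Y ω ^ 4 ∂P := by
  have hindep (i j : ℕ) : IndepFun (fun ω ↦ X ω ^ i) (fun ω ↦ Y ω ^ j) P :=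
    hXY.comp (measurable_id.pow_const i) (measurable_id.pow_const j)
  have hint (i : ℕ) (hi : i ∈ Finset.range 5) :
      Integrable (fun ω ↦ X ω ^ i * Y ω ^ (4 - i) * (Nat.choose 4 i : ℝ)) P := by
    have hi : i ≤ 4 := Nat.lt_succ_iff.1 (Finset.mem_range.1 hi)
    exact ((hindep i (4 - i)).integrable_mul (hX.integrable_pow hi)
      (hY.integrable_pow (Nat.sub_le 4 i))).mul_const _
  have hmul (i j : ℕ) : ∫ ω, X ω ^ i * Y ω ^ j ∂P = (∫ ω, X ω ^ i ∂P) * ∫ ω, Y ω ^ j ∂P :=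
    (hindep i j).integral_fun_mul_eq_mul_integral (hX.aestronglyMeasurable.pow i)
      (hY.aestronglyMeasurable.pow j)
  simp_rw [add_pow]
  rw [integral_finsetSum _ hint]
  norm_num [Finset.sum_range_succ, integral_mul_const, hmul, hX0, hY0, Nat.choose]
  ring

variable {ι : Type*} {X : ι → Ω → ℝ}

lemma ProbabilityTheory.iIndepFun.integral_sum_sq (hindep : iIndepFun X P)
    (hX : ∀ i, MemLp (X i) 2 P) (hX0 : ∀ i, ∫ ω, X i ω ∂P = 0) (s : Finset ι) :
    ∫ ω, (∑ i ∈ s, X i ω) ^ 2 ∂P = ∑ i ∈ s, ∫ ω, X i ω ^ 2 ∂P := by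
  have hvar := IndepFun.variance_sum (s := s) (fun i _ ↦ hX i)
    fun i _ j _ hij ↦ hindep.indepFun hij
  have hmeas (i : ι) : AEMeasurable (X i) P := (hX i).aestronglyMeasurable.aemeasurable
  rw [variance_of_integral_eq_zero (Finset.aemeasurable_sum s fun i _ ↦ hmeas i)] at hvar
  · simpa only [Finset.sum_apply, variance_of_integral_eq_zero (hmeas _) (hX0 _)] using hvar
  · rw [Finset.sum_fn, integral_finsetSum _ fun i _ ↦ (hX i).integrable one_le_two]
    simp [hX0]

lemma ProbabilityTheory.iIndepFun.integral_sum_pow_four_le (hindep : iIndepFun X P)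
    (hX : ∀ i, MemLp (X i) 4 P) (hX0 : ∀ i, ∫ ω, X i ω ∂P = 0) {K : ℝ} (hK : 3 ≤ K)
    (hX4 : ∀ i, ∫ ω, X i ω ^ 4 ∂P ≤ K * (∫ ω, X i ω ^ 2 ∂P) ^ 2) (s : Finset ι) :
    ∫ ω, (∑ i ∈ s, X i ω) ^ 4 ∂P ≤ K * (∑ i ∈ s, ∫ ω, X i ω ^ 2 ∂P) ^ 2 := by
  classical
  induction s using Finset.induction_on with
  | empty => simp
  | insert a s ha ih =>
    have hS : MemLp (fun ω ↦ ∑ i ∈ s, X i ω) 4 P := memLp_finsetSum s fun i _ ↦ hX i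
    have hS0 : ∫ ω, ∑ i ∈ s, X i ω ∂P = 0 := by
      rw [integral_finsetSum _ fun i _ ↦ (hX i).integrable (by norm_num)]
      simp [hX0]
    have hindep_a : IndepFun (X a) (fun ω ↦ ∑ i ∈ s, X i ω) P := by
      have := (hindep.indepFun_finsetSum_of_notMem₀
        (fun i ↦ (hX i).aestronglyMeasurable.aemeasurable) ha).symm
      simpa only [Finset.sum_fn] using this
    have hS2 := hindep.integral_sum_sq (fun i ↦ (hX i).mono_exponent (by norm_num)) hX0 s
    have hv (i : ι) : 0 ≤ ∫ ω, X i ω ^ 2 ∂P := integral_nonneg fun ω ↦ sq_nonneg _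
    simp only [Finset.sum_insert ha]
    rw [hindep_a.integral_add_pow_four (hX a) hS (hX0 a) hS0, hS2]
    have := hX4 a
    have := Finset.sum_nonneg fun i (_ : i ∈ s) ↦ hv i
    -- `K v² + 6 v V + K V² ≤ K (v + V)²` is exactly where `3 ≤ K` is needed
    nlinarith [hv a, mul_nonneg (hv a) this]

end Moments

lemma ProbabilityTheory.iIndepFun.curry {Ω ι κ 𝓧 : Type*} [MeasurableSpace Ω] [MeasurableSpace 𝓧]
    {P : Measure Ω} {X : ι × κ → Ω → 𝓧} (hX : ∀ p, Measurable (X p)) (h : iIndepFun X P) :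
    iIndepFun (fun i ω j ↦ X (i, j) ω) P := by
  have := h.isProbabilityMeasure
  have (p : ι × κ) : IsProbabilityMeasure (P.map (X p)) :=
    Measure.isProbabilityMeasure_map (hX p).aemeasurable
  have hblock (i : ι) :
      P.map (fun ω j ↦ X (i, j) ω) = Measure.infinitePi fun j ↦ P.map (X (i, j)) :=
    (h.precomp (Prod.mk_right_injective i)).map_fun_eq_infinitePi_map fun j ↦ hX (i, j)
  rw [iIndepFun_iff_map_fun_eq_infinitePi_map fun i ↦ measurable_pi_lambda _ fun j ↦ hX (i, j)]
  simp_rw [hblock]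
  rw [← Measure.infinitePi_map_curry (fun i j ↦ P.map (X (i, j))),
    ← h.map_fun_eq_infinitePi_map hX, Measure.map_map]
  · rfl
  all_goals fun_prop

section GaussianProduct

variable {Ω : Type*} [MeasurableSpace Ω] {P : Measure Ω} {ξ η : Ω → ℝ}

lemma ProbabilityTheory.HasLaw.integral_pow {μ : Measure ℝ} (hξ : HasLaw ξ μ P) (k : ℕ) :
    ∫ ω, ξ ω ^ k ∂P = ∫ x, x ^ k ∂μ :=
  hξ.integral_comp (f := fun x ↦ x ^ k) (by fun_prop)

lemma ProbabilityTheory.HasLaw.memLp_gaussianReal {m : ℝ} {v : ℝ≥0}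
    (hξ : HasLaw ξ (gaussianReal m v) P) (p : ℝ≥0) : MemLp ξ p P := by
  have := memLp_id_gaussianReal (μ := m) (v := v) p
  rw [← hξ.map_eq] at this
  exact (memLp_map_measure_iff aestronglyMeasurable_id hξ.aemeasurable).1 this

lemma integral_mul_pow_of_gaussianReal (hξ : HasLaw ξ (gaussianReal 0 1) P)
    (hη : HasLaw η (gaussianReal 0 1) P) (hξη : IndepFun ξ η P) (k : ℕ) :
    ∫ ω, (ξ ω * η ω) ^ k ∂P = (∫ x, x ^ k ∂gaussianReal 0 1) ^ 2 := by
  have := hξ.isProbabilityMeasure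
  rw [hξη.integral_mul_pow k ((hξ.memLp_gaussianReal k).integrable_pow le_rfl)
    ((hη.memLp_gaussianReal k).integrable_pow le_rfl), hξ.integral_pow, hη.integral_pow, sq]

lemma memLp_mul_of_gaussianReal (hξ : HasLaw ξ (gaussianReal 0 1) P)
    (hη : HasLaw η (gaussianReal 0 1) P) (hξη : IndepFun ξ η P) {p : ℝ≥0} (hp : p ≠ 0) :
    MemLp (fun ω ↦ ξ ω * η ω) p P :=
  hξη.memLp_mul (by exact_mod_cast hp) ENNReal.coe_ne_top (hξ.memLp_gaussianReal p)
    (hη.memLp_gaussianReal p)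

lemma memLp_sum_mul_gaussian {ι : Type*} {ξ η : ι → Ω → ℝ}
    (hξ : ∀ i, HasLaw (ξ i) (gaussianReal 0 1) P) (hη : ∀ i, HasLaw (η i) (gaussianReal 0 1) P)
    (hξη : ∀ i, IndepFun (ξ i) (η i) P) (c : ι → ℝ) (s : Finset ι) :
    MemLp (fun ω ↦ ∑ i ∈ s, c i * (ξ i ω * η i ω)) 4 P :=
  memLp_finsetSum s fun i _ ↦
    (memLp_mul_of_gaussianReal (hξ i) (hη i) (hξη i) four_ne_zero).const_mul (c i)

lemma integral_sum_mul_gaussian_pow_four_le {ι : Type*} {ξ η : ι → Ω → ℝ}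
    (hξ : ∀ i, HasLaw (ξ i) (gaussianReal 0 1) P) (hη : ∀ i, HasLaw (η i) (gaussianReal 0 1) P)
    (hξη : ∀ i, IndepFun (ξ i) (η i) P) (hindep : iIndepFun (fun i ω ↦ ξ i ω * η i ω) P)
    (c : ι → ℝ) (s : Finset ι) {M : ℝ} (hc : ∀ i ∈ s, |c i| ≤ M) :
    ∫ ω, (∑ i ∈ s, c i * (ξ i ω * η i ω)) ^ 4 ∂P ≤ 9 * (s.card * M ^ 2) ^ 2 := by
  have := hindep.isProbabilityMeasure
  have hmoment (i : ι) (k : ℕ) : ∫ ω, (c i * (ξ i ω * η i ω)) ^ k ∂P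
      = c i ^ k * (∫ x, x ^ k ∂gaussianReal 0 1) ^ 2 := by
    simp_rw [mul_pow (c i), integral_const_mul,
      integral_mul_pow_of_gaussianReal (hξ i) (hη i) (hξη i)]
  have hmemLp (i : ι) : MemLp (fun ω ↦ c i * (ξ i ω * η i ω)) 4 P :=
    (memLp_mul_of_gaussianReal (hξ i) (hη i) (hξη i) four_ne_zero).const_mul (c i)
  have hY : iIndepFun (fun i ω ↦ c i * (ξ i ω * η i ω)) P :=
    hindep.comp (fun i x ↦ c i * x) fun i ↦ measurable_const_mul (c i)
  have hsum := hY.integral_sum_pow_four_le hmemLp (fun i ↦ by simpa using hmoment i 1)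
    (by norm_num : (3 : ℝ) ≤ 9) fun i ↦ by
      rw [hmoment, hmoment, integral_sq_gaussianReal, integral_pow_four_gaussianReal]
      exact le_of_eq (by push_cast; ring)
  have hc2 : ∑ i ∈ s, c i ^ 2 ≤ s.card * M ^ 2 := by
    calc ∑ i ∈ s, c i ^ 2 ≤ ∑ _i ∈ s, M ^ 2 := Finset.sum_le_sum fun i hi ↦ by
          simpa only [sq_abs] using pow_le_pow_left₀ (abs_nonneg _) (hc i hi) 2
      _ = s.card * M ^ 2 := by rw [Finset.sum_const, nsmul_eq_mul]
  calc ∫ ω, (∑ i ∈ s, c i * (ξ i ω * η i ω)) ^ 4 ∂P ≤ 9 * (∑ i ∈ s, c i ^ 2) ^ 2 := by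
        simpa [hmoment, integral_sq_gaussianReal] using hsum s
    _ ≤ 9 * (s.card * M ^ 2) ^ 2 := by gcongr

end GaussianProduct

lemma Int.card_Icc_neg_natCast (m : ℕ) : (Finset.Icc (-(m : ℤ)) m).card = 2 * m + 1 := by
  rw [Int.card_Icc]
  omega

section RandomCosSum

variable {Ω : Type*}

-- The paper's `U_n(t)` for `n = 2m + 1`.
noncomputable def randomCosSum (w : ℤ → ℝ) (ξ η : ℤ → Ω → ℝ) (m : ℕ) (t : ℝ) (ω : Ω) : ℝ :=
  (1 / (2 * (m : ℝ) + 1)) *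
    ∑ l ∈ Finset.Icc (-(m : ℤ)) (m : ℤ), w l * Real.cos ((l : ℝ) * t) * ξ l ω * η l ω

noncomputable def randomCosSumDeriv (w : ℤ → ℝ) (ξ η : ℤ → Ω → ℝ) (m : ℕ) (t : ℝ) (ω : Ω) : ℝ :=
  (1 / (2 * (m : ℝ) + 1)) *
    ∑ l ∈ Finset.Icc (-(m : ℤ)) (m : ℤ), -(w l * l * Real.sin ((l : ℝ) * t)) * ξ l ω * η l ω

variable (w : ℤ → ℝ) (ξ η : ℤ → Ω → ℝ) (m : ℕ)

lemma hasDerivAt_randomCosSum (t : ℝ) (ω : Ω) :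
    HasDerivAt (randomCosSum w ξ η m · ω) (randomCosSumDeriv w ξ η m t ω) t := by
  refine (HasDerivAt.fun_sum fun l _ ↦ ?_).const_mul _
  have := ((((hasDerivAt_id t).const_mul (l : ℝ)).cos.const_mul (w l)).mul_const (ξ l ω)).mul_const
    (η l ω)
  exact this.congr_deriv (by simp only [id, mul_one]; ring)

lemma continuous_randomCosSumDeriv (ω : Ω) : Continuous (randomCosSumDeriv w ξ η m · ω) := by
  unfold randomCosSumDeriv
  fun_prop

lemma randomCosSum_eq_sum (t : ℝ) (ω : Ω) :
    randomCosSum w ξ η m t ω = ∑ l ∈ Finset.Icc (-(m : ℤ)) (m : ℤ),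
      1 / (2 * (m : ℝ) + 1) * (w l * Real.cos ((l : ℝ) * t)) * (ξ l ω * η l ω) := by
  rw [randomCosSum, Finset.mul_sum]
  exact Finset.sum_congr rfl fun l _ ↦ by ring

lemma randomCosSumDeriv_eq_sum (t : ℝ) (ω : Ω) :
    randomCosSumDeriv w ξ η m t ω = ∑ l ∈ Finset.Icc (-(m : ℤ)) (m : ℤ),
      1 / (2 * (m : ℝ) + 1) * -(w l * l * Real.sin ((l : ℝ) * t)) * (ξ l ω * η l ω) := by
  rw [randomCosSumDeriv, Finset.mul_sum]
  exact Finset.sum_congr rfl fun l _ ↦ by ring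

variable [MeasurableSpace Ω] {ξ η}

lemma measurable_uncurry_randomCosSum (hξ : ∀ l, Measurable (ξ l)) (hη : ∀ l, Measurable (η l)) :
    Measurable (Function.uncurry (randomCosSum w ξ η m)) := by
  unfold randomCosSum Function.uncurry
  refine Measurable.const_mul (Finset.measurable_sum _ fun l _ ↦ ?_) _
  have := hξ l
  have := hη l
  fun_prop

lemma measurable_uncurry_randomCosSumDeriv (hξ : ∀ l, Measurable (ξ l))
    (hη : ∀ l, Measurable (η l)) : Measurable (Function.uncurry (randomCosSumDeriv w ξ η m)) := by
  unfold randomCosSumDeriv Function.uncurry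
  refine Measurable.const_mul (Finset.measurable_sum _ fun l _ ↦ ?_) _
  have := hξ l
  have := hη l
  fun_prop

variable {P : Measure Ω} {w}

lemma integral_randomCosSum_pow_four_le (hξ : ∀ l, HasLaw (ξ l) (gaussianReal 0 1) P)
    (hη : ∀ l, HasLaw (η l) (gaussianReal 0 1) P) (hξη : ∀ l, IndepFun (ξ l) (η l) P)
    (hindep : iIndepFun (fun l ω ↦ ξ l ω * η l ω) P) {C : ℝ} (hw : ∀ l, |w l| ≤ C) (t : ℝ) :
    ∫ ω, randomCosSum w ξ η m t ω ^ 4 ∂P ≤ 9 * C ^ 4 / (2 * m + 1) ^ 2 := by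
  have hn : (0 : ℝ) < 2 * m + 1 := by positivity
  simp_rw [randomCosSum_eq_sum]
  refine (integral_sum_mul_gaussian_pow_four_le hξ hη hξη hindep _ _ (M := C / (2 * m + 1))
    fun l _ ↦ ?_).trans (le_of_eq ?_)
  · rw [abs_mul, abs_mul, abs_of_pos (one_div_pos.2 hn), one_div_mul_eq_div]
    gcongr
    calc |w l| * |cos (l * t)| ≤ C * 1 := by
          gcongr
          · exact (abs_nonneg _).trans (hw l)
          · exact hw l
          · exact abs_cos_le_one _
      _ = C := mul_one C
  · rw [Int.card_Icc_neg_natCast]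
    push_cast
    field_simp

lemma integral_randomCosSumDeriv_pow_four_le (hξ : ∀ l, HasLaw (ξ l) (gaussianReal 0 1) P)
    (hη : ∀ l, HasLaw (η l) (gaussianReal 0 1) P) (hξη : ∀ l, IndepFun (ξ l) (η l) P)
    (hindep : iIndepFun (fun l ω ↦ ξ l ω * η l ω) P) {C : ℝ} (hw : ∀ l, |w l| ≤ C) (t : ℝ) :
    ∫ ω, randomCosSumDeriv w ξ η m t ω ^ 4 ∂P ≤ 9 * C ^ 4 * (2 * m + 1) ^ 2 := by
  have hn : (0 : ℝ) < 2 * m + 1 := by positivity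
  have hC : 0 ≤ C := (abs_nonneg _).trans (hw 0)
  simp_rw [randomCosSumDeriv_eq_sum]
  refine (integral_sum_mul_gaussian_pow_four_le hξ hη hξη hindep _ _ (M := C)
    fun l hl ↦ ?_).trans (le_of_eq ?_)
  · have hl : |(l : ℝ)| ≤ m := by
      rw [Finset.mem_Icc] at hl
      exact abs_le.2 ⟨by exact_mod_cast hl.1, by exact_mod_cast hl.2⟩
    rw [abs_mul, abs_neg, abs_mul, abs_mul, abs_of_pos (one_div_pos.2 hn), one_div_mul_eq_div,
      div_le_iff₀ hn]
    calc |w l| * |(l : ℝ)| * |sin (l * t)| ≤ C * m * 1 := by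
          gcongr
          · exact hw l
          · exact abs_sin_le_one _
      _ ≤ C * (2 * m + 1) := by nlinarith
  · rw [Int.card_Icc_neg_natCast]
    push_cast
    ring

lemma measure_lt_iSup_abs_randomCosSum_le (hξm : ∀ l, Measurable (ξ l))
    (hηm : ∀ l, Measurable (η l)) (hξ : ∀ l, HasLaw (ξ l) (gaussianReal 0 1) P)
    (hη : ∀ l, HasLaw (η l) (gaussianReal 0 1) P) (hξη : ∀ l, IndepFun (ξ l) (η l) P)
    (hindep : iIndepFun (fun l ω ↦ ξ l ω * η l ω) P) {C : ℝ} (hw : ∀ l, |w l| ≤ C) {ε : ℝ}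
    (hε : 0 < ε) :
    P {ω | ε < ⨆ t : Icc (-(2 * π)) (2 * π), |randomCosSum w ξ η m t ω|}
      ≤ ENNReal.ofReal (4 * π * (45 * C ^ 4 / (2 * m + 1)) / ε ^ 4) := by
  have hn : (1 : ℝ) ≤ 2 * m + 1 := by linarith [m.cast_nonneg (α := ℝ)]
  have h2π : -(2 * π) < 2 * π := by linarith [pi_pos]
  have := hindep.isProbabilityMeasure
  set U := randomCosSum w ξ η m
  set U' := randomCosSumDeriv w ξ η m
  set Q : ℝ → Ω → ℝ := fun t ω ↦
    ((4 * π)⁻¹ + 3 * (2 * m + 1)) * U t ω ^ 4 + ((2 * (m : ℝ) + 1) ^ 3)⁻¹ * U' t ω ^ 4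
  have hsub : {ω | ε < ⨆ t : Icc (-(2 * π)) (2 * π), |U t ω|}
      ⊆ {ω | ε ^ 4 ≤ ∫ t in -(2 * π)..2 * π, Q t ω} := by
    intro ω hω
    have := (nonempty_Icc.2 h2π.le).to_subtype
    obtain ⟨⟨t, ht⟩, hlt⟩ :=
      exists_lt_of_lt_ciSup (show ε < ⨆ t : Icc (-(2 * π)) (2 * π), |U t ω| from hω)
    have hsob := pow_four_le_integral_of_hasDerivAt h2π (hasDerivAt_randomCosSum w ξ η m · ω)
      (continuous_randomCosSumDeriv w ξ η m ω) (by positivity : (0 : ℝ) < 2 * m + 1) ht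
    rw [show 2 * π - -(2 * π) = 4 * π by ring] at hsob
    calc ε ^ 4 ≤ |U t ω| ^ 4 := pow_le_pow_left₀ hε.le hlt.le 4
      _ = U t ω ^ 4 := Even.pow_abs ⟨2, rfl⟩ _
      _ ≤ ∫ t in -(2 * π)..2 * π, Q t ω := hsob
  have hU4 (t : ℝ) : Integrable (fun ω ↦ U t ω ^ 4) P := by
    simp_rw [U, randomCosSum_eq_sum]
    exact (memLp_sum_mul_gaussian hξ hη hξη _ _).integrable_pow le_rfl
  have hU'4 (t : ℝ) : Integrable (fun ω ↦ U' t ω ^ 4) P := by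
    simp_rw [U', randomCosSumDeriv_eq_sum]
    exact (memLp_sum_mul_gaussian hξ hη hξη _ _).integrable_pow le_rfl
  have hQint (t : ℝ) : Integrable (Q t) P := ((hU4 t).const_mul _).add ((hU'4 t).const_mul _)
  have hQmom (t : ℝ) : ∫ ω, Q t ω ∂P ≤ 45 * C ^ 4 / (2 * m + 1) := by
    rw [integral_add ((hU4 t).const_mul _) ((hU'4 t).const_mul _), integral_const_mul,
      integral_const_mul]
    have hπ : (4 * π)⁻¹ ≤ 2 * m + 1 :=
      (inv_le_one_of_one_le₀ (by linarith [pi_gt_three])).trans hn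
    calc ((4 * π)⁻¹ + 3 * (2 * m + 1)) * ∫ ω, U t ω ^ 4 ∂P
          + ((2 * (m : ℝ) + 1) ^ 3)⁻¹ * ∫ ω, U' t ω ^ 4 ∂P
        ≤ (4 * (2 * m + 1)) * (9 * C ^ 4 / (2 * m + 1) ^ 2)
          + ((2 * (m : ℝ) + 1) ^ 3)⁻¹ * (9 * C ^ 4 * (2 * m + 1) ^ 2) := by
          gcongr
          · linarith
          · exact integral_randomCosSum_pow_four_le m hξ hη hξη hindep hw t
          · exact integral_randomCosSumDeriv_pow_four_le m hξ hη hξη hindep hw t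
      _ = 45 * C ^ 4 / (2 * m + 1) := by
          field_simp
          ring
  have hQm : Measurable (Function.uncurry Q) :=
    (((measurable_uncurry_randomCosSum w m hξm hηm).pow_const 4).const_mul _).add
      (((measurable_uncurry_randomCosSumDeriv w m hξm hηm).pow_const 4).const_mul _)
  refine (measure_mono hsub).trans ((meas_ge_intervalIntegral_le hQm (fun t ω ↦ by positivity)
    hQint h2π.le (by positivity) hQmom).trans_eq ?_)
  congr 1
  ring

end RandomCosSum

theorem stmt14_general {Ω : Type*} [MeasurableSpace Ω] (P : Measure Ω)
    (ξ η : ℤ → Ω → ℝ) (hξmeas : ∀ l, Measurable (ξ l)) (hηmeas : ∀ l, Measurable (η l))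
    (hindep : iIndepFun
      (fun p : ℤ × Bool => if p.2 then ξ p.1 else η p.1) P)
    (hξgauss : ∀ l, Measure.map (ξ l) P = gaussianReal 0 1)
    (hηgauss : ∀ l, Measure.map (η l) P = gaussianReal 0 1)
    (C : ℝ) (w : ℤ → ℝ) (hw : ∀ l, 0 ≤ w l ∧ w l ≤ C) :
    ∀ ε > (0 : ℝ),
      Tendsto (fun m : ℕ =>
          P {ω | ε < ⨆ h : Set.Icc (-(2 * Real.pi)) (2 * Real.pi),
            |(1 / (2 * (m : ℝ) + 1)) *
              ∑ l ∈ Finset.Icc (-(m : ℤ)) (m : ℤ),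
                w l * Real.cos ((l : ℝ) * (h : ℝ)) * ξ l ω * η l ω|})
        atTop (nhds 0) := by
  intro ε hε
  have hmeas (p : ℤ × Bool) : Measurable (if p.2 then ξ p.1 else η p.1) := by
    rcases p with ⟨l, _ | _⟩ <;> simp [hξmeas, hηmeas]
  have hprod : iIndepFun (fun l ω ↦ ξ l ω * η l ω) P :=
    (hindep.curry hmeas).comp (fun _ v ↦ v true * v false) fun _ ↦ by fun_prop
  have hξη (l : ℤ) : IndepFun (ξ l) (η l) P := by
    simpa using hindep.indepFun (i := (l, true)) (j := (l, false)) (by simp)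
  have hw' (l : ℤ) : |w l| ≤ C := abs_le.2 ⟨by linarith [hw l], (hw l).2⟩
  have hbound (m : ℕ) := measure_lt_iSup_abs_randomCosSum_le m hξmeas hηmeas
    (fun l ↦ ⟨(hξmeas l).aemeasurable, hξgauss l⟩) (fun l ↦ ⟨(hηmeas l).aemeasurable, hηgauss l⟩)
    hξη hprod hw' hε
  have hlim : Tendsto (fun m : ℕ ↦ 4 * π * (45 * C ^ 4 / (2 * m + 1)) / ε ^ 4) atTop (nhds 0) := by
    have hn : Tendsto (fun m : ℕ ↦ 2 * (m : ℝ) + 1) atTop atTop :=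
      tendsto_atTop_add_const_right _ 1 (tendsto_natCast_atTop_atTop.const_mul_atTop two_pos)
    simpa using ((tendsto_const_nhds.div_atTop hn).const_mul (4 * π)).div_const (ε ^ 4)
  exact tendsto_of_tendsto_of_tendsto_of_le_of_le tendsto_const_nhds
    (by simpa using ENNReal.tendsto_ofReal hlim) (fun _ ↦ zero_le) hbound

/-- With `U_n(h) = (1/n) Σ_{|l| ≤ (n−1)/2} w_l cos(l h) ξ_l η_l` for odd
`n = 2m+1`, one has `sup_{h ∈ [−2π,2π]} |U_n(h)| → 0` in probability, where the family
`(ξ_l) ∪ (η_l)` consists of mutually independent standard Gaussians and `0 ≤ w_l ≤ C`. -/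
theorem stmt14 {Ω : Type*} [MeasurableSpace Ω] (P : Measure Ω) [IsProbabilityMeasure P]
    (ξ η : ℤ → Ω → ℝ) (hξmeas : ∀ l, Measurable (ξ l)) (hηmeas : ∀ l, Measurable (η l))
    (hindep : iIndepFun
      (fun p : ℤ × Bool => if p.2 then ξ p.1 else η p.1) P)
    (hξgauss : ∀ l, Measure.map (ξ l) P = gaussianReal 0 1)
    (hηgauss : ∀ l, Measure.map (η l) P = gaussianReal 0 1)
    (C : ℝ) (w : ℤ → ℝ) (hw : ∀ l, 0 ≤ w l ∧ w l ≤ C) :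
    ∀ ε > (0 : ℝ),
      Tendsto (fun m : ℕ =>
          P {ω | ε < ⨆ h : Set.Icc (-(2 * Real.pi)) (2 * Real.pi),
            |(1 / (2 * (m : ℝ) + 1)) *
              ∑ l ∈ Finset.Icc (-(m : ℤ)) (m : ℤ),
                w l * Real.cos ((l : ℝ) * (h : ℝ)) * ξ l ω * η l ω|})
        atTop (nhds 0) :=
  stmt14_general P ξ η hξmeas hηmeas hindep hξgauss hηgauss C w hw
end

section
/- Define, for odd n and h ∈ ℝ, V_n(h) = (1/√n) Σ_{|l| ≤ (n−1)/2} b_l cos(l h + θ_l) ξ_l. Then sup_{h ∈ [−2π, 2π]} |V_n(h)| → 0 in probability as n → ∞ through odd integers. -/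
/-!
Bounding `|cos| ≤ 1` removes the supremum: `sup_h |V_n(h)| ≤ n^{-1/2} Σ_{|l| ≤ m} |b_l| |ξ_l|`,
whose expectation is `E|ξ| · n^{-1/2} Σ_{|l| ≤ m} |b_l|`. This deterministic quantity tends to `0`
for square-summable `b`: a fixed finite head of the sum contributes `O(n^{-1/2})`, and by
Cauchy–Schwarz the rest contributes at most the `ℓ²` norm of the tail. Markov's inequality
concludes.
-/

open Filter MeasureTheory ProbabilityTheory Topology Finset

theorem sum_abs_le_sqrt_card_mul_sqrt_sum_sq {ι : Type*} (u : Finset ι) (f : ι → ℝ) :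
    ∑ i ∈ u, |f i| ≤ √(#u : ℝ) * √(∑ i ∈ u, f i ^ 2) := by
  rw [← Real.sqrt_mul (Nat.cast_nonneg _)]
  refine Real.le_sqrt_of_sq_le ((sq_sum_le_card_mul_sum_sq).trans_eq ?_)
  simp only [sq_abs]

theorem tendsto_sum_abs_div_sqrt_card_of_summable_sq {ι : Type*} [DecidableEq ι] {b : ι → ℝ}
    (hb : Summable fun i => b i ^ 2) {s : ℕ → Finset ι}
    (hs : Tendsto (fun m => (#(s m) : ℝ)) atTop atTop) :
    Tendsto (fun m => (∑ i ∈ s m, |b i|) / √(#(s m) : ℝ)) atTop (𝓝 0) := by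
  have hsqrt : Tendsto (fun m => √(#(s m) : ℝ)) atTop atTop := Real.tendsto_sqrt_atTop.comp hs
  refine tendsto_order.2 ⟨fun a ha => Eventually.of_forall fun m => ha.trans_le (by positivity),
    fun δ hδ => ?_⟩
  obtain ⟨t, ht⟩ := hb.vanishing (Iio_mem_nhds (by positivity : (0 : ℝ) < (δ / 2) ^ 2))
  have hhead : Tendsto (fun m => (∑ i ∈ t, |b i|) / √(#(s m) : ℝ)) atTop (𝓝 0) :=
    tendsto_const_nhds.div_atTop hsqrt
  filter_upwards [hhead.eventually (gt_mem_nhds (half_pos hδ)), hsqrt.eventually_gt_atTop 0]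
    with m hhead_lt hpos
  have htail : √(∑ i ∈ s m \ t, b i ^ 2) < δ / 2 :=
    (Real.sqrt_lt' (half_pos hδ)).2 (ht _ disjoint_sdiff_self_left)
  have hsplit :
      ∑ i ∈ s m, |b i| ≤ ∑ i ∈ t, |b i| + √(#(s m) : ℝ) * √(∑ i ∈ s m \ t, b i ^ 2) := by
    rw [← sum_inter_add_sum_sdiff (s m) t]
    refine add_le_add
      (sum_le_sum_of_subset_of_nonneg inter_subset_right fun i _ _ => abs_nonneg (b i))
      ((sum_abs_le_sqrt_card_mul_sqrt_sum_sq _ _).trans ?_)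
    gcongr
    exact sdiff_subset
  calc (∑ i ∈ s m, |b i|) / √(#(s m) : ℝ)
      ≤ (∑ i ∈ t, |b i|) / √(#(s m) : ℝ) + √(∑ i ∈ s m \ t, b i ^ 2) := by
        rw [div_add' _ _ _ hpos.ne', mul_comm]
        gcongr
    _ < δ / 2 + δ / 2 := add_lt_add hhead_lt htail
    _ = δ := add_halves δ

theorem Int.card_Icc_neg_natCast_self (m : ℕ) : (#(Icc (-(m : ℤ)) m) : ℝ) = 2 * m + 1 := by
  rw [Int.card_Icc, show (m : ℤ) + 1 - -m = ((2 * m + 1 : ℕ) : ℤ) by push_cast; ring,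
    Int.toNat_natCast]
  push_cast
  ring

theorem tendsto_sum_Icc_abs_div_sqrt_of_summable_sq {b : ℤ → ℝ}
    (hb : Summable fun l => b l ^ 2) :
    Tendsto (fun m : ℕ => (∑ l ∈ Icc (-(m : ℤ)) m, |b l|) / √(2 * m + 1)) atTop (𝓝 0) := by
  have hgrow : Tendsto (fun m : ℕ => (2 * m + 1 : ℝ)) atTop atTop :=
    tendsto_atTop_add_const_right _ 1 (tendsto_natCast_atTop_atTop.const_mul_atTop two_pos)
  simpa only [Int.card_Icc_neg_natCast_self] using
    tendsto_sum_abs_div_sqrt_card_of_summable_sq (s := fun m : ℕ => Icc (-(m : ℤ)) m) hb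
      (by simpa only [Int.card_Icc_neg_natCast_self] using hgrow)

theorem iSup_abs_mul_sum_mul_cos_mul_le {T ι : Type*} (s : Finset ι) (a : ℝ) (b y : ι → ℝ)
    (φ : T → ι → ℝ) :
    ⨆ t, |a * ∑ l ∈ s, b l * Real.cos (φ t l) * y l| ≤ |a| * ∑ l ∈ s, |b l| * |y l| := by
  refine Real.iSup_le (fun t => ?_) (by positivity)
  rw [abs_mul]
  gcongr
  refine (abs_sum_le_sum_abs _ _).trans (sum_le_sum fun l _ => ?_)
  calc |b l * Real.cos (φ t l) * y l| = |b l| * |Real.cos (φ t l)| * |y l| := by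
        rw [abs_mul, abs_mul]
    _ ≤ |b l| * 1 * |y l| := by gcongr; exact Real.abs_cos_le_one _
    _ = |b l| * |y l| := by rw [mul_one]

theorem measure_le_mul_sum_abs_mul_abs_le {Ω ι : Type*} [MeasurableSpace Ω] (P : Measure Ω)
    [IsFiniteMeasure P] {ξ : ι → Ω → ℝ} {c : ℝ} (hint : ∀ l, Integrable (ξ l) P)
    (hmean : ∀ l, ∫ ω, |ξ l ω| ∂P ≤ c) (s : Finset ι) (a : ℝ) (b : ι → ℝ) {ε : ℝ}
    (hε : 0 < ε) :
    P {ω | ε ≤ |a| * ∑ l ∈ s, |b l| * |ξ l ω|} ≤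
      ENNReal.ofReal (|a| * (∑ l ∈ s, |b l|) * c / ε) := by
  have hterm : ∀ l, Integrable (fun ω => |b l| * |ξ l ω|) P := fun l => (hint l).abs.const_mul _
  have hintegral : ∫ ω, |a| * ∑ l ∈ s, |b l| * |ξ l ω| ∂P ≤ |a| * (∑ l ∈ s, |b l|) * c := by
    rw [integral_const_mul, integral_finsetSum _ fun l _ => hterm l, mul_assoc, sum_mul]
    gcongr with l
    rw [integral_const_mul]
    gcongr
    exact hmean l
  have hmarkov := mul_meas_ge_le_integral_of_nonneg (ae_of_all P fun ω => by positivity)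
    ((integrable_finsetSum s fun l _ => hterm l).const_mul |a|) ε
  rw [← ofReal_measureReal]
  exact ENNReal.ofReal_le_ofReal ((le_div_iff₀' hε).2 (hmarkov.trans hintegral))

theorem stmt15_general {Ω : Type*} [MeasurableSpace Ω] (P : Measure Ω) [IsProbabilityMeasure P]
    (ξ : ℤ → Ω → ℝ) (hξmeas : ∀ l, Measurable (ξ l))
    (hgauss : ∀ l, Measure.map (ξ l) P = gaussianReal 0 1)
    (b : ℤ → ℝ) (hb2 : Summable fun l : ℤ => b l ^ 2)
    (θ : ℤ → ℝ) :
    ∀ ε > (0 : ℝ),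
      Tendsto (fun m : ℕ =>
          P {ω | ε < ⨆ h : Set.Icc (-(2 * Real.pi)) (2 * Real.pi),
            |(1 / Real.sqrt (2 * (m : ℝ) + 1)) *
              ∑ l ∈ Finset.Icc (-(m : ℤ)) (m : ℤ),
                b l * Real.cos ((l : ℝ) * (h : ℝ) + θ l) * ξ l ω|})
        atTop (nhds 0) := by
  intro ε hε
  have hint : ∀ l, Integrable (ξ l) P := fun l =>
    Integrable.comp_measurable (g := id)
      (by rw [hgauss l]; exact (memLp_id_gaussianReal 1).integrable le_rfl) (hξmeas l)
  obtain ⟨c, hmean⟩ : ∃ c, ∀ l, ∫ ω, |ξ l ω| ∂P ≤ c := ⟨∫ x, |x| ∂gaussianReal 0 1, fun l => by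
    rw [← hgauss l, integral_map (hξmeas l).aemeasurable continuous_abs.aestronglyMeasurable]⟩
  have hbound : Tendsto (fun m : ℕ =>
      |1 / √(2 * m + 1)| * (∑ l ∈ Icc (-(m : ℤ)) m, |b l|) * c / ε) atTop (𝓝 0) := by
    have h := ((tendsto_sum_Icc_abs_div_sqrt_of_summable_sq hb2).mul_const c).div_const ε
    rw [zero_mul, zero_div] at h
    refine h.congr fun m => ?_
    rw [abs_of_nonneg (by positivity), one_div_mul_eq_div]
  refine tendsto_of_tendsto_of_tendsto_of_le_of_le tendsto_const_nhds
    (ENNReal.ofReal_zero ▸ ENNReal.tendsto_ofReal hbound) (fun _ => zero_le) fun m => ?_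
  calc _ ≤ P {ω | ε ≤ |1 / √(2 * m + 1)| * ∑ l ∈ Icc (-(m : ℤ)) m, |b l| * |ξ l ω|} :=
        measure_mono fun ω hω => (hω.trans_le (iSup_abs_mul_sum_mul_cos_mul_le _ _ _ _ _)).le
    _ ≤ _ := measure_le_mul_sum_abs_mul_abs_le P hint hmean _ _ _ hε

/-- With `V_n(h) = (1/√n) Σ_{|l| ≤ (n−1)/2} b_l cos(l h + θ_l) ξ_l` for odd
`n = 2m+1`, one has `sup_{h ∈ [−2π,2π]} |V_n(h)| → 0` in probability, where the `ξ_l` are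
i.i.d. standard Gaussians, `b_l ≥ 0` with `Σ b_l² < ∞`, and `θ_l` arbitrary phases. -/
theorem stmt15 {Ω : Type*} [MeasurableSpace Ω] (P : Measure Ω) [IsProbabilityMeasure P]
    (ξ : ℤ → Ω → ℝ) (hξmeas : ∀ l, Measurable (ξ l))
    (hindep : iIndepFun ξ P)
    (hgauss : ∀ l, Measure.map (ξ l) P = gaussianReal 0 1)
    (b : ℤ → ℝ) (hb : ∀ l, 0 ≤ b l) (hb2 : Summable fun l : ℤ => b l ^ 2)
    (θ : ℤ → ℝ) :
    ∀ ε > (0 : ℝ),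
      Tendsto (fun m : ℕ =>
          P {ω | ε < ⨆ h : Set.Icc (-(2 * Real.pi)) (2 * Real.pi),
            |(1 / Real.sqrt (2 * (m : ℝ) + 1)) *
              ∑ l ∈ Finset.Icc (-(m : ℤ)) (m : ℤ),
                b l * Real.cos ((l : ℝ) * (h : ℝ) + θ l) * ξ l ω|})
        atTop (nhds 0) :=
  stmt15_general P ξ hξmeas hgauss b hb2 θ
end
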